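/- arXiv:2306.07811 — 6 statements merged into one kernel-verified Lean document; each statement's English description precedes it below -/
import Mathlib

section
/- Let t ≥ k > 0 be integers and let b_1 ≥ b_2 ≥ ... ≥ b_t > 0 be reals such that b_{t-k+1} + ... + b_t ≥ α for some α > 0. Then for any real x, any n ≥ t, and any further reals b_{t+1}, ..., b_n, the Rademacher sum Σ_{i=1}^n b_i ε_i satisfies P(Σ_{i=1}^n b_i ε_i ∈ (x - α, x + α)) ≤ f(k,t)/2^t, where f(k,t) denotes the sum of the k largest binomial coefficients of the form C(t,i), 0 ≤ i ≤ t. -/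
/-- The probability that a finite Rademacher sum with weights `a` (signs chosen
independently and uniformly from `{-1,+1}`) satisfies the predicate `p`. -/
noncomputable def radProb {ι : Type*} [Fintype ι] (a : ι → ℝ) (p : ℝ → Prop) : ℝ :=
  (Nat.card {ε : ι → Bool | p (∑ i, a i * (if ε i then (1 : ℝ) else -1))}) /
    2 ^ (Fintype.card ι)

/-- `sumKLargestBinom k t` is the sum of the `k` largest binomial coefficients
of the form `C(t, i)`, `0 ≤ i ≤ t`, i.e. the maximum over `k`-element subsets
of `{0, ..., t}` of the sum of the corresponding binomial coefficients. -/
def sumKLargestBinom (k t : ℕ) : ℕ :=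
  (Finset.powersetCard k (Finset.range (t + 1))).sup (fun S => ∑ i ∈ S, Nat.choose t i)

/-!
Erdős' argument. Fix the signs `ε_{t+1}, …, ε_n`; the remaining sum is `2 ∑_{i ∈ A} b_i` minus a
constant, where `A ⊆ {1, …, t}` is the set of indices with `ε_i = +1`. If `A ⊆ B` both put the sum
into the open interval of length `2α`, then `∑_{i ∈ B \ A} b_i < α`, whereas any `k` of
`b_1, …, b_t` sum to at least `α`; hence `|B| < |A| + k`. Peeling off maximal elements `k` times
splits such a family into `k` antichains, so the LYM inequality gives `∑_A 1 / C(t, |A|) ≤ k`, and a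
fractional knapsack argument bounds the size of the family by the sum of the `k` largest binomial
coefficients.
-/

open Finset

namespace Finset

variable {ι α 𝕜 : Type*} [DecidableEq ι] [Fintype α] [Semifield 𝕜]

theorem sum_le_sum_of_card_eq {M : Type*} [AddCommMonoid M] [PartialOrder M]
    [IsOrderedAddMonoid M] {s t : Finset ι} {f : ι → M} (c : M)
    (hst : #s = #t) (hs : ∀ i ∈ s \ t, f i ≤ c) (ht : ∀ i ∈ t \ s, c ≤ f i) :
    ∑ i ∈ s, f i ≤ ∑ i ∈ t, f i := by
  rw [← sum_inter_add_sum_sdiff s t, ← sum_inter_add_sum_sdiff t s, inter_comm]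
  gcongr _ + ?_
  calc ∑ i ∈ s \ t, f i ≤ #(s \ t) • c := sum_le_card_nsmul _ _ _ hs
    _ = #(t \ s) • c := by rw [card_sdiff_comm hst]
    _ ≤ ∑ i ∈ t \ s, f i := card_nsmul_le_sum _ _ _ ht

theorem card_lt_add_of_sum_sdiff_lt {w : ι → ℝ} {k : ℕ} {α : ℝ} {A B : Finset ι}
    (hw : ∀ i ∈ B, 0 ≤ w i) (hα : ∀ T ⊆ B, #T = k → α ≤ ∑ i ∈ T, w i)
    (hAB : A ⊆ B) (hsum : ∑ i ∈ B \ A, w i < α) : #B < #A + k := by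
  by_contra! hk
  obtain ⟨T, hT, rfl⟩ := exists_subset_card_eq (s := B \ A) (n := k)
    (by rw [card_sdiff_of_subset hAB]; omega)
  have := sum_le_sum_of_subset_of_nonneg hT fun i hi _ => hw i (sdiff_subset hi)
  linarith [hα T (hT.trans sdiff_subset) rfl]

theorem sum_mul_le_sum_of_sum_le_card {R : Type*} [CommRing R] [LinearOrder R]
    [IsStrictOrderedRing R] {s S : Finset ι} {x c : ι → R} (c₀ : R)
    (hS : S ⊆ s) (hx₀ : ∀ i ∈ s, 0 ≤ x i) (hx₁ : ∀ i ∈ S, x i ≤ 1) (hxs : ∑ i ∈ s, x i ≤ #S)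
    (hc₀ : 0 ≤ c₀) (hout : ∀ i ∈ s \ S, c i ≤ c₀) (hin : ∀ i ∈ S, c₀ ≤ c i) :
    ∑ i ∈ s, x i * c i ≤ ∑ i ∈ S, c i := by
  have hsdiff : ∑ i ∈ s \ S, x i * c i ≤ ∑ i ∈ s \ S, c₀ * x i :=
    sum_le_sum fun i hi => by
      rw [mul_comm]; exact mul_le_mul_of_nonneg_right (hout i hi) (hx₀ i (sdiff_subset hi))
  have hin' : ∑ i ∈ S, x i * c i ≤ ∑ i ∈ S, (c i - c₀ * (1 - x i)) :=
    sum_le_sum fun i hi => by nlinarith [hin i hi, hx₁ i hi]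
  have hxs' : c₀ * ∑ i ∈ s, x i ≤ c₀ * #S := mul_le_mul_of_nonneg_left hxs hc₀
  rw [← sum_sdiff hS] at hxs' ⊢
  simp only [sum_sub_distrib, mul_sub, ← mul_sum, sum_const, nsmul_eq_mul, mul_one, mul_add]
    at hsdiff hin' hxs'
  linarith

theorem sum_inv_choose_le_of_card_lt_add [LinearOrder 𝕜] [IsStrictOrderedRing 𝕜] {k : ℕ}
    {𝒜 : Finset (Finset α)} (h𝒜 : ∀ A ∈ 𝒜, ∀ B ∈ 𝒜, A ⊆ B → #B < #A + k) :
    ∑ A ∈ 𝒜, ((Fintype.card α).choose #A : 𝕜)⁻¹ ≤ k := by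
  classical
  induction k generalizing 𝒜 with
  | zero =>
    obtain rfl : 𝒜 = ∅ := eq_empty_of_forall_notMem fun A hA => by
      simpa using h𝒜 A hA A hA le_rfl
    simp
  | succ k ih =>
    set M : Finset (Finset α) := 𝒜.filter (Maximal fun A : Finset α => A ∈ 𝒜)
    have hM : IsAntichain (· ⊆ ·) (M : Set (Finset α)) :=
      (setOfPred_maximal_antichain (· ∈ 𝒜)).subset fun A hA => (mem_filter.1 hA).2
    have hrest : ∀ A ∈ 𝒜 \ M, ∀ B ∈ 𝒜 \ M, A ⊆ B → #B < #A + k := by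
      intro A hA B hB hAB
      obtain ⟨hB𝒜, hBM⟩ := mem_sdiff.1 hB
      obtain ⟨C, hBC, hC⟩ := 𝒜.exists_le_maximal hB𝒜
      have hBC' : B ⊂ C := hBC.lt_of_ne fun h => hBM (mem_filter.2 ⟨hB𝒜, h ▸ hC⟩)
      have := card_lt_card hBC'
      have := h𝒜 A (mem_sdiff.1 hA).1 C hC.1 (hAB.trans hBC)
      omega
    rw [← sum_sdiff (filter_subset _ 𝒜 : M ⊆ 𝒜), Nat.cast_succ]
    exact add_le_add (ih hrest) (lubell_yamamoto_meshalkin_inequality_sum_inv_choose hM)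

theorem sum_card_slice_div_choose_eq_sum_inv_choose (𝒜 : Finset (Finset α)) :
    ∑ r ∈ range (Fintype.card α + 1), (#(𝒜 # r) / (Fintype.card α).choose r : 𝕜) =
      ∑ A ∈ 𝒜, ((Fintype.card α).choose #A : 𝕜)⁻¹ := by
  classical
  rw [← sum_fiberwise_of_maps_to' (g := card) (fun A _ => mem_range_succ_iff.2 A.card_le_univ)
    fun r => ((Fintype.card α).choose r : 𝕜)⁻¹]
  simp [slice, div_eq_mul_inv]

end Finset

theorem exists_sumKLargestBinom_eq {k t : ℕ} (hk : k ≤ t + 1) :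
    ∃ S ⊆ range (t + 1), #S = k ∧ ∑ i ∈ S, t.choose i = sumKLargestBinom k t ∧
      ∀ i ∈ S, ∀ j ∈ range (t + 1) \ S, t.choose j ≤ t.choose i := by
  classical
  obtain ⟨S, hS, hmax⟩ := exists_mem_eq_sup _
    (powersetCard_nonempty (s := range (t + 1)).2 (by simpa using hk))
    fun S => ∑ i ∈ S, t.choose i
  obtain ⟨hSsub, hScard⟩ := mem_powersetCard.1 hS
  refine ⟨S, hSsub, hScard, hmax.symm, fun i hi j hj => ?_⟩
  obtain ⟨hjt, hjS⟩ := mem_sdiff.1 hj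
  have hle : ∑ l ∈ insert j (S.erase i), t.choose l ≤ ∑ l ∈ S, t.choose l := by
    rw [← hmax]
    refine le_sup (f := fun S => ∑ i ∈ S, t.choose i) (mem_powersetCard.2 ⟨?_, ?_⟩)
    · exact insert_subset hjt ((erase_subset _ _).trans hSsub)
    · rw [card_insert_of_notMem fun h => hjS (mem_of_mem_erase h), card_erase_of_mem hi]
      have := card_pos.2 ⟨i, hi⟩
      omega
  have hexchange : ∑ l ∈ insert j (S.erase i), t.choose l + t.choose i =
      t.choose j + ∑ l ∈ S, t.choose l := by
    rw [sum_insert fun h => hjS (mem_of_mem_erase h), add_assoc, sum_erase_add _ _ hi]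
  linarith

theorem card_le_sumKLargestBinom {α : Type*} [Fintype α] {k : ℕ} (hk : k ≤ Fintype.card α + 1)
    {𝒜 : Finset (Finset α)} (h𝒜 : ∀ A ∈ 𝒜, ∀ B ∈ 𝒜, A ⊆ B → #B < #A + k) :
    #𝒜 ≤ sumKLargestBinom k (Fintype.card α) := by
  set n := Fintype.card α
  rcases 𝒜.eq_empty_or_nonempty with rfl | ⟨A, hA⟩
  · simp
  have hk₀ : 0 < k := by simpa using h𝒜 A hA A hA le_rfl
  obtain ⟨S, hS, hScard, hSsum, hSmax⟩ := exists_sumKLargestBinom_eq hk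
  obtain ⟨i₀, hi₀, hi₀min⟩ := S.exists_min_image n.choose (card_pos.1 (hScard ▸ hk₀))
  have hchoose : ∀ r ∈ range (n + 1), (0 : ℚ) < n.choose r := fun r hr =>
    Nat.cast_pos.2 (Nat.choose_pos (mem_range_succ_iff.1 hr))
  suffices (#𝒜 : ℚ) ≤ ∑ r ∈ S, (n.choose r : ℚ) by rw [← hSsum]; exact_mod_cast this
  calc (#𝒜 : ℚ) = ∑ r ∈ range (n + 1), (#(𝒜 # r) : ℚ) / n.choose r * n.choose r := by
        rw [sum_congr rfl fun r hr => div_mul_cancel₀ _ (hchoose r hr).ne', ← Nat.cast_sum,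
          Nat.range_succ_eq_Iic, sum_card_slice]
    _ ≤ ∑ r ∈ S, (n.choose r : ℚ) := by
      refine sum_mul_le_sum_of_sum_le_card (n.choose i₀ : ℚ) hS (fun r _ => by positivity)
        (fun r hr => ?_) ?_ (by positivity) (fun r hr => ?_) (fun r hr => ?_)
      · rw [div_le_one (hchoose r (hS hr))]
        exact_mod_cast sized_slice.card_le
      · rw [sum_card_slice_div_choose_eq_sum_inv_choose, hScard]
        exact sum_inv_choose_le_of_card_lt_add h𝒜
      · exact_mod_cast hSmax i₀ hi₀ r hr
      · exact_mod_cast hi₀min r hr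

theorem AntitoneOn.sum_Icc_le_sum {b : ℕ → ℝ} {t : ℕ} (hb : AntitoneOn b (Set.Icc 1 t))
    {T : Finset ℕ} (hT : T ⊆ Icc 1 t) : ∑ i ∈ Icc (t - #T + 1) t, b i ≤ ∑ i ∈ T, b i := by
  have hTt : #T ≤ t := by simpa using card_le_card hT
  refine sum_le_sum_of_card_eq (b (t - #T + 1)) (by simp; omega) (fun j hj => ?_) (fun i hi => ?_)
  · simp only [mem_sdiff, mem_Icc] at hj
    exact hb ⟨by omega, by omega⟩ ⟨by omega, hj.1.2⟩ hj.1.1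
  · obtain ⟨hiT, hiI⟩ := mem_sdiff.1 hi
    have := mem_Icc.1 (hT hiT)
    have := card_pos.2 ⟨i, hiT⟩
    rw [mem_Icc] at hiI
    exact hb ⟨by omega, by omega⟩ ⟨by omega, by omega⟩ (by omega)

section Rademacher

variable {ι : Type*} [Fintype ι]

theorem radProb_eq_sum [DecidableEq ι] (a : ι → ℝ) (p : ℝ → Prop) [DecidablePred p] :
    radProb a p = (∑ ε : ι → Bool,
      if p (∑ i, a i * if ε i then (1 : ℝ) else -1) then (1 : ℝ) else 0) / 2 ^ Fintype.card ι := by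
  rw [radProb, sum_boole, Nat.card_eq_fintype_card, Fintype.card_subtype]
  rfl

theorem sum_mul_sign_eq (w : ι → ℝ) (ε : ι → Bool) :
    ∑ i, w i * (if ε i then (1 : ℝ) else -1) = 2 * ∑ i ∈ {i | ε i}, w i - ∑ i, w i := by
  rw [sum_filter, mul_sum, ← sum_sub_distrib]
  refine sum_congr rfl fun i _ => ?_
  cases ε i <;> simp; ring

theorem radProb_Ioo_le {k : ℕ} (hk : k ≤ Fintype.card ι + 1) {w : ι → ℝ} (hw : ∀ i, 0 ≤ w i)
    {α : ℝ} (hα : ∀ T : Finset ι, #T = k → α ≤ ∑ i ∈ T, w i) (x : ℝ) :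
    radProb w (fun y => x - α < y ∧ y < x + α) ≤
      sumKLargestBinom k (Fintype.card ι) / 2 ^ Fintype.card ι := by
  classical
  rw [radProb_eq_sum, sum_boole]
  gcongr
  set φ : (ι → Bool) → Finset ι := fun ε => {i | ε i}
  have hφ : Function.Injective φ := fun ε ε' h => funext fun i => by
    simpa [φ] using congr(i ∈ $h)
  rw [← card_image_of_injective _ hφ]
  refine Nat.cast_le.2 (card_le_sumKLargestBinom hk fun A hA B hB hAB => ?_)
  obtain ⟨ε, hε, rfl⟩ := mem_image.1 hA
  obtain ⟨ε', hε', rfl⟩ := mem_image.1 hB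
  simp only [mem_filter, mem_univ, true_and, sum_mul_sign_eq] at hε hε'
  refine card_lt_add_of_sum_sdiff_lt (fun i _ => hw i) (fun T _ => hα T) hAB ?_
  rw [sum_sdiff_eq_sub hAB]
  linarith

theorem radProb_le_of_forall_add {t m : ℕ} (a : Fin (t + m) → ℝ) (p : ℝ → Prop) {B : ℝ}
    (h : ∀ c, radProb (fun i : Fin t => a (Fin.castAdd m i)) (fun y => p (y + c)) ≤ B) :
    radProb a p ≤ B := by
  classical
  set head := fun σ : Fin t → Bool => ∑ i, a (Fin.castAdd m i) * if σ i then 1 else -1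
  set tail := fun τ : Fin m → Bool => ∑ j, a (Fin.natAdd t j) * if τ j then 1 else -1
  have hsplit : ∀ σ τ, ∑ i, a i * (if Fin.append σ τ i then 1 else -1) = head σ + tail τ :=
    fun σ τ => by simp [head, tail, Fin.sum_univ_add]
  rw [radProb_eq_sum, div_le_iff₀ (by positivity), ← (Fin.appendEquiv t m).sum_comp,
    Fintype.sum_prod_type_right]
  calc _ ≤ ∑ _τ : Fin m → Bool, B * 2 ^ t := sum_le_sum fun τ _ => by
        simp only [Fin.appendEquiv_apply, hsplit]
        have := h (tail τ)
        rwa [radProb_eq_sum, div_le_iff₀ (by positivity), Fintype.card_fin] at this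
    _ = B * 2 ^ Fintype.card (Fin (t + m)) := by simp [pow_add]; ring

end Rademacher

theorem rademacher_anticoncentration_general (k t : ℕ) (hkt : k ≤ t)
    (b : ℕ → ℝ)
    (hmono : ∀ i j : ℕ, 1 ≤ i → i ≤ j → j ≤ t → b j ≤ b i)
    (hpos : ∀ i : ℕ, 1 ≤ i → i ≤ t → 0 < b i)
    (α : ℝ)
    (hsum : α ≤ ∑ i ∈ Finset.Icc (t - k + 1) t, b i)
    (n : ℕ) (hn : t ≤ n) (x : ℝ) :
    radProb (fun i : Fin n => b ((i : ℕ) + 1)) (fun y => x - α < y ∧ y < x + α)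
      ≤ (sumKLargestBinom k t : ℝ) / 2 ^ t := by
  obtain ⟨m, rfl⟩ := Nat.exists_eq_add_of_le hn
  have hb : AntitoneOn b (Set.Icc 1 t) := fun i hi j hj hij => hmono i j hi.1 hij hj.2
  have hweights : ∀ T : Finset (Fin t), #T = k → α ≤ ∑ i ∈ T, b (i + 1) := by
    intro T hT
    set e : Fin t ↪ ℕ := ⟨fun i => i + 1, fun i j h => Fin.ext (by simpa using h)⟩
    have hTe : T.map e ⊆ Icc 1 t := fun y hy => by
      obtain ⟨i, -, rfl⟩ := mem_map.1 hy
      exact mem_Icc.2 ⟨Nat.le_add_left 1 i, i.isLt⟩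
    calc α ≤ ∑ i ∈ Icc (t - k + 1) t, b i := hsum
      _ ≤ ∑ i ∈ T.map e, b i := by simpa [hT] using hb.sum_Icc_le_sum hTe
      _ = ∑ i ∈ T, b (i + 1) := sum_map _ _ _
  refine radProb_le_of_forall_add _ _ fun c => ?_
  have hshift : (fun y => x - α < y + c ∧ y + c < x + α) =
      fun y => x - c - α < y ∧ y < x - c + α := by
    ext y; constructor <;> rintro ⟨h₁, h₂⟩ <;> constructor <;> linarith
  simp only [hshift]
  simpa using radProb_Ioo_le (by simp; omega) (fun i => (hpos _ (by omega) (by omega)).le)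
    hweights (x - c)

/-- Erdős' anticoncentration bound: if `b 1 ≥ b 2 ≥ ... ≥ b t > 0` with
`b (t-k+1) + ... + b t ≥ α`, then for any `x` and further weights `b (t+1), ..., b n`
the Rademacher sum lands in `(x - α, x + α)` with probability at most
`sumKLargestBinom k t / 2 ^ t`. -/
theorem rademacher_anticoncentration (k t : ℕ) (hk : 0 < k) (hkt : k ≤ t)
    (b : ℕ → ℝ)
    (hmono : ∀ i j : ℕ, 1 ≤ i → i ≤ j → j ≤ t → b j ≤ b i)
    (hpos : ∀ i : ℕ, 1 ≤ i → i ≤ t → 0 < b i)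
    (α : ℝ) (hα : 0 < α)
    (hsum : α ≤ ∑ i ∈ Finset.Icc (t - k + 1) t, b i)
    (n : ℕ) (hn : t ≤ n) (x : ℝ) :
    radProb (fun i : Fin n => b ((i : ℕ) + 1)) (fun y => x - α < y ∧ y < x + α)
      ≤ (sumKLargestBinom k t : ℝ) / 2 ^ t :=
  rademacher_anticoncentration_general k t hkt b hmono hpos α hsum n hn x
end

section
/- Let s, a_1, ..., a_k be positive reals, and let A, B ⊆ {-1,+1}^k be disjoint sets of sign sequences. Assume there is an injection φ : A → B satisfying Σ_{i=1}^k ζ_i a_i + Σ_{i=1}^k φ(ζ)_i a_i ≥ 2s for all ζ ∈ A. Then for any symmetric random variable Z (i.e. Z and −Z have the same distribution), Σ_{ε ∈ A ∪ B} P(Σ_{i=1}^k ε_i a_i + Z ≥ s) ≥ |A|. -/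
open MeasureTheory

lemma key_pair (Ω : Type*) [MeasurableSpace Ω]
    (μ : Measure Ω) [IsProbabilityMeasure μ]
    (Z : Ω → ℝ) (hZ : Measurable Z)
    (hsymm : Measure.map Z μ = Measure.map (fun ω => -(Z ω)) μ)
    (s u v : ℝ) (huv : u + v ≥ 2 * s) :
    (μ {ω | u + Z ω ≥ s}).toReal + (μ {ω | v + Z ω ≥ s}).toReal ≥ 1 := by
  have h1 : {ω | u + Z ω ≥ s} = Z ⁻¹' Set.Ici (s - u) := by
    ext ω; simp only [Set.mem_setOf_eq, Set.mem_preimage, Set.mem_Ici]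
    constructor <;> intro <;> linarith
  have h2 : {ω | v + Z ω ≥ s} = Z ⁻¹' Set.Ici (s - v) := by
    ext ω; simp only [Set.mem_setOf_eq, Set.mem_preimage, Set.mem_Ici]
    constructor <;> intro <;> linarith
  have hsym : μ (Z ⁻¹' Set.Ici (s - v)) = μ (Z ⁻¹' Set.Iic (v - s)) := by
    have hm : Measurable fun ω => -(Z ω) := hZ.neg
    calc μ (Z ⁻¹' Set.Ici (s - v))
        = Measure.map Z μ (Set.Ici (s - v)) := (Measure.map_apply hZ measurableSet_Ici).symm
      _ = Measure.map (fun ω => -(Z ω)) μ (Set.Ici (s - v)) := by rw [hsymm]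
      _ = μ ((fun ω => -(Z ω)) ⁻¹' Set.Ici (s - v)) := Measure.map_apply hm measurableSet_Ici
      _ = μ (Z ⁻¹' Set.Iic (v - s)) := by
          congr 1; ext ω
          simp only [Set.mem_preimage, Set.mem_Ici, Set.mem_Iic]
          constructor <;> intro <;> linarith
  have hmono : μ (Z ⁻¹' Set.Iic (s - u)) ≤ μ (Z ⁻¹' Set.Iic (v - s)) := by
    apply measure_mono
    apply Set.preimage_mono
    exact Set.Iic_subset_Iic.mpr (by linarith)
  have hcover : μ (Z ⁻¹' Set.Ici (s - u)) + μ (Z ⁻¹' Set.Iic (s - u)) ≥ 1 := by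
    have : (Set.univ : Set Ω) ⊆ Z ⁻¹' Set.Ici (s - u) ∪ Z ⁻¹' Set.Iic (s - u) := by
      intro ω _
      rcases le_total (s - u) (Z ω) with h | h
      · exact Or.inl h
      · exact Or.inr h
    calc (1 : ENNReal) = μ Set.univ := (measure_univ).symm
      _ ≤ μ (Z ⁻¹' Set.Ici (s - u) ∪ Z ⁻¹' Set.Iic (s - u)) := measure_mono this
      _ ≤ _ := measure_union_le _ _
  have hkey : μ (Z ⁻¹' Set.Ici (s - u)) + μ (Z ⁻¹' Set.Ici (s - v)) ≥ 1 := by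
    rw [hsym]
    calc (1 : ENNReal) ≤ μ (Z ⁻¹' Set.Ici (s - u)) + μ (Z ⁻¹' Set.Iic (s - u)) := hcover
      _ ≤ _ := add_le_add le_rfl hmono
  rw [h1, h2]
  have hne1 : μ (Z ⁻¹' Set.Ici (s - u)) ≠ ⊤ := measure_ne_top μ _
  have hne2 : μ (Z ⁻¹' Set.Ici (s - v)) ≠ ⊤ := measure_ne_top μ _
  have := ENNReal.toReal_mono (by simp [hne1, hne2, ENNReal.add_ne_top]) hkey
  rwa [ENNReal.toReal_one, ENNReal.toReal_add hne1 hne2] at this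

/-- The pairing lemma: if an injection `φ : A → B` pairs sign sequences whose two
weighted sums together total at least `2s`, then for any symmetric random variable `Z`
the probabilities `P(∑ εᵢ aᵢ + Z ≥ s)` over `ε ∈ A ∪ B` sum to at least `|A|`. -/
theorem pairing_lemma (Ω : Type*) [MeasurableSpace Ω]
    (μ : Measure Ω) [IsProbabilityMeasure μ]
    (Z : Ω → ℝ) (hZ : Measurable Z)
    (hsymm : Measure.map Z μ = Measure.map (fun ω => -(Z ω)) μ)
    (k : ℕ) (hk : 0 < k) (s : ℝ) (hs : 0 < s)
    (a : Fin k → ℝ) (ha : ∀ i, 0 < a i)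
    (A B : Finset (Fin k → Bool)) (hAB : Disjoint A B)
    (φ : (Fin k → Bool) → (Fin k → Bool))
    (hφmem : ∀ ζ ∈ A, φ ζ ∈ B) (hφinj : Set.InjOn φ ↑A)
    (hφ : ∀ ζ ∈ A,
      (∑ i, a i * (if ζ i then (1 : ℝ) else -1)) +
        (∑ i, a i * (if φ ζ i then (1 : ℝ) else -1)) ≥ 2 * s) :
    ∑ ε ∈ A ∪ B,
        (μ {ω | (∑ i, a i * (if ε i then (1 : ℝ) else -1)) + Z ω ≥ s}).toReal
      ≥ (A.card : ℝ) := by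
  set f : (Fin k → Bool) → ℝ :=
    fun ε => (μ {ω | (∑ i, a i * (if ε i then (1 : ℝ) else -1)) + Z ω ≥ s}).toReal with hf
  have hfnn : ∀ ε, 0 ≤ f ε := fun ε => ENNReal.toReal_nonneg
  have hsplit : ∑ ε ∈ A ∪ B, f ε = ∑ ε ∈ A, f ε + ∑ ε ∈ B, f ε :=
    Finset.sum_union hAB
  have himg : ∑ ε ∈ A.image φ, f ε ≤ ∑ ε ∈ B, f ε := by
    apply Finset.sum_le_sum_of_subset_of_nonneg
    · intro x hx
      obtain ⟨ζ, hζ, rfl⟩ := Finset.mem_image.mp hx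
      exact hφmem ζ hζ
    · intro x _ _; exact hfnn x
  have himg2 : ∑ ε ∈ A.image φ, f ε = ∑ ζ ∈ A, f (φ ζ) :=
    Finset.sum_image (fun x hx y hy h => hφinj hx hy h)
  have hpair : ∀ ζ ∈ A, f ζ + f (φ ζ) ≥ 1 := by
    intro ζ hζ
    exact key_pair Ω μ Z hZ hsymm s _ _ (hφ ζ hζ)
  calc ∑ ε ∈ A ∪ B, f ε = ∑ ε ∈ A, f ε + ∑ ε ∈ B, f ε := hsplit
    _ ≥ ∑ ε ∈ A, f ε + ∑ ζ ∈ A, f (φ ζ) := by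
        rw [← himg2]; exact add_le_add le_rfl himg
    _ = ∑ ζ ∈ A, (f ζ + f (φ ζ)) := (Finset.sum_add_distrib).symm
    _ ≥ ∑ ζ ∈ A, (1 : ℝ) := Finset.sum_le_sum hpair
    _ = (A.card : ℝ) := by simp
end

section
/- Let X = Σ_{i=1}^n a_i ε_i be a normalized finite Rademacher sum with a_1 ≥ a_2 ≥ ... ≥ a_n > 0 and n ≥ 2. If P(X ≥ 1) < 7/64, then a_1 + a_2 < 1. -/
private lemma sum_pair {n : ℕ} (a : Fin n → ℝ) (i0 i1 : Fin n) (hne : i0 ≠ i1)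
    (ε : Fin n → Bool) :
    (∑ i, a i * (if (if i = i0 ∨ i = i1 then true else ε i) then (1:ℝ) else -1))
    + (∑ i, a i * (if (if i = i0 ∨ i = i1 then true else !(ε i)) then (1:ℝ) else -1))
    = 2 * a i0 + 2 * a i1 := by
  rw [← Finset.sum_add_distrib]
  have key : ∀ i ∈ Finset.univ,
      (a i * (if (if i = i0 ∨ i = i1 then true else ε i) then (1:ℝ) else -1))
      + (a i * (if (if i = i0 ∨ i = i1 then true else !(ε i)) then (1:ℝ) else -1))
      = (if i = i0 then 2 * a i0 else 0) + (if i = i1 then 2 * a i1 else 0) := by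
    intro i _
    by_cases h0 : i = i0
    · subst h0
      simp [hne]
      ring
    · by_cases h1 : i = i1
      · subst h1
        simp [h0]
        ring
      · simp only [h0, h1, or_self, if_false]
        cases ε i <;> simp <;> ring
  rw [Finset.sum_congr rfl key, Finset.sum_add_distrib,
      Finset.sum_ite_eq' Finset.univ i0, Finset.sum_ite_eq' Finset.univ i1]
  simp

theorem a1_add_a2_lt_one (n : ℕ) (hn : 2 ≤ n) (a : Fin n → ℝ)
    (hmono : ∀ i j : Fin n, i ≤ j → a j ≤ a i) (hpos : ∀ i, 0 < a i)
    (hnorm : ∑ i, (a i) ^ 2 = 1)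
    (hX : radProb a (fun x => x ≥ 1) < 7 / 64) :
    a ⟨0, by omega⟩ + a ⟨1, by omega⟩ < 1 := by
  classical
  by_contra hcon
  push_neg at hcon
  set i0 : Fin n := ⟨0, by omega⟩ with hi0def
  set i1 : Fin n := ⟨1, by omega⟩ with hi1def
  have hne : i0 ≠ i1 := by
    simp [hi0def, hi1def, Fin.ext_iff]
  have hcon' : 1 ≤ a i0 + a i1 := hcon
  set S : Set (Fin n → Bool) :=
    {ε : Fin n → Bool | (fun x => x ≥ 1) (∑ i, a i * (if ε i then (1:ℝ) else -1))} with hSdef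
  -- modified sign vectors
  let A : (Fin n → Bool) → (Fin n → Bool) :=
    fun ε i => if i = i0 ∨ i = i1 then true else ε i
  have hA2 : ∀ ε : Fin n → Bool, A (fun j => !(ε j)) = fun i => if i = i0 ∨ i = i1 then true else !(ε i) := by
    intro ε; rfl
  have hsum : ∀ ε : Fin n → Bool,
      (∑ i, a i * (if A ε i then (1:ℝ) else -1))
      + (∑ i, a i * (if A (fun j => !(ε j)) i then (1:ℝ) else -1))
      = 2 * a i0 + 2 * a i1 := by
    intro ε
    exact sum_pair a i0 i1 hne ε
  have hmem : ∀ ε : Fin n → Bool, A ε ∉ S → A (fun j => !(ε j)) ∈ S := by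
    intro ε h
    have h1 : ¬ ((∑ i, a i * (if A ε i then (1:ℝ) else -1)) ≥ 1) := h
    push_neg at h1
    have := hsum ε
    have : (∑ i, a i * (if A (fun j => !(ε j)) i then (1:ℝ) else -1)) ≥ 1 := by
      linarith
    exact this
  -- injective map into S × Bool × Bool × Bool
  let f : (Fin n → Bool) → (S × Bool × Bool × Bool) :=
    fun ε => if h : A ε ∈ S then (⟨A ε, h⟩, ε i0, ε i1, true)
      else (⟨A (fun j => !(ε j)), hmem ε h⟩, ε i0, ε i1, false)
  have hinj : Function.Injective f := by
    intro ε ζ h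
    simp only [f] at h
    split_ifs at h with h1 h2 h2 <;>
      simp only [Prod.mk.injEq, Subtype.mk.injEq] at h
    · obtain ⟨hAeq, he0, he1, -⟩ := h
      funext i
      by_cases hi0 : i = i0
      · rw [hi0]; exact he0
      · by_cases hi1 : i = i1
        · rw [hi1]; exact he1
        · have := congrFun hAeq i
          simpa [A, hi0, hi1] using this
    · exact absurd h.2.2.2 (by simp)
    · exact absurd h.2.2.2 (by simp)
    · obtain ⟨hAeq, he0, he1, -⟩ := h
      funext i
      by_cases hi0 : i = i0
      · rw [hi0]; exact he0
      · by_cases hi1 : i = i1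
        · rw [hi1]; exact he1
        · have := congrFun hAeq i
          simp only [A, hi0, hi1, or_self, if_false] at this
          exact Bool.not_inj this
  have hcard : Nat.card (Fin n → Bool) ≤ Nat.card (S × Bool × Bool × Bool) :=
    Nat.card_le_card_of_injective f hinj
  have hcardL : Nat.card (Fin n → Bool) = 2 ^ n := by
    simp [Nat.card_eq_fintype_card]
  have hcardR : Nat.card (S × Bool × Bool × Bool) = Nat.card S * 8 := by
    simp [Nat.card_prod, Nat.card_eq_fintype_card]
  have hkey : 2 ^ n ≤ Nat.card S * 8 := by
    rw [← hcardL, ← hcardR]; exact hcard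
  -- conclude
  have hrad : radProb a (fun x => x ≥ 1) = (Nat.card S : ℝ) / 2 ^ n := by
    simp [radProb, hSdef]
  rw [hrad] at hX
  have h2n : (0:ℝ) < 2 ^ n := by positivity
  have hkey' : (2:ℝ) ^ n ≤ (Nat.card S : ℝ) * 8 := by
    exact_mod_cast hkey
  have hlt : (Nat.card S : ℝ) / 2 ^ n < 7 / 64 := hX
  have : (Nat.card S : ℝ) < 7 / 64 * 2 ^ n := by
    rw [div_lt_iff₀ h2n] at hlt
    linarith
  linarith
end

section
/- Let X = Σ_{i=1}^n a_i ε_i be a normalized finite Rademacher sum with a_1 ≥ a_2 ≥ ... ≥ a_n > 0 and n ≥ 5. If P(X ≥ 1) < 7/64, then a_3 + a_4 + a_5 < 1. -/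
open Finset

/-- `Sfun b σ` : signed sum of five weights. -/
def Sfun (b : Fin 5 → ℝ) (σ : Fin 5 → Bool) : ℝ :=
  ∑ i, b i * (if σ i then (1 : ℝ) else -1)

lemma count_lower (p : (Fin 5 → Bool) → Prop) [DecidablePred p]
    (F : Finset (Fin 5 → Bool)) (hF : ∀ σ ∈ F, p σ) :
    F.card ≤ ∑ σ : Fin 5 → Bool, if p σ then 1 else 0 := by
  calc F.card = ∑ σ ∈ F, if p σ then 1 else 0 := by
        rw [Finset.card_eq_sum_ones]
        exact Finset.sum_congr rfl fun σ h => by rw [if_pos (hF σ h)]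
    _ ≤ ∑ σ : Fin 5 → Bool, if p σ then 1 else 0 :=
        Finset.sum_le_sum_of_subset (Finset.subset_univ F)

lemma core_nonneg (b : Fin 5 → ℝ) (h01 : b 1 ≤ b 0) (h12 : b 2 ≤ b 1)
    (h23 : b 3 ≤ b 2) (h34 : b 4 ≤ b 3) (h4 : 0 < b 4)
    (hs : 1 ≤ b 2 + b 3 + b 4) (t : ℝ) (ht : 0 ≤ t) :
    7 ≤ (∑ σ : Fin 5 → Bool, if 1 ≤ Sfun b σ + t then 1 else 0) +
        (∑ σ : Fin 5 → Bool, if 1 ≤ Sfun b σ - t then 1 else 0) := by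
  rcases le_or_gt (2 * b 4) t with hc | hc
  · have h8 : (8 : ℕ) ≤ ∑ σ : Fin 5 → Bool, if 1 ≤ Sfun b σ + t then 1 else 0 := by
      have := count_lower (fun σ => 1 ≤ Sfun b σ + t)
        {![true,true,true,true,true], ![true,false,true,true,true],
         ![true,true,false,true,true], ![true,true,true,false,true],
         ![true,true,true,true,false], ![true,true,true,false,false],
         ![true,true,false,true,false], ![true,false,true,true,false]}
        (by intro σ hσ; fin_cases hσ <;> simp [Sfun, Fin.sum_univ_five] <;> linarith)
      refine le_trans ?_ this
      decide
    omega
  · rcases le_or_gt t (b 0 + b 1 - 2 * b 4) with hc2 | hc2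
    · have h5 : (5 : ℕ) ≤ ∑ σ : Fin 5 → Bool, if 1 ≤ Sfun b σ + t then 1 else 0 := by
        have := count_lower (fun σ => 1 ≤ Sfun b σ + t)
          {![true,true,true,true,true], ![true,false,true,true,true],
           ![true,true,false,true,true], ![true,true,true,false,true],
           ![true,true,true,true,false]}
          (by intro σ hσ; fin_cases hσ <;> simp [Sfun, Fin.sum_univ_five] <;> linarith)
        refine le_trans ?_ this
        decide
      have h2 : (2 : ℕ) ≤ ∑ σ : Fin 5 → Bool, if 1 ≤ Sfun b σ - t then 1 else 0 := by
        have := count_lower (fun σ => 1 ≤ Sfun b σ - t)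
          {![true,true,true,true,true], ![true,true,true,true,false]}
          (by intro σ hσ; fin_cases hσ <;> simp [Sfun, Fin.sum_univ_five] <;> linarith)
        refine le_trans ?_ this
        decide
      omega
    · have h6 : (6 : ℕ) ≤ ∑ σ : Fin 5 → Bool, if 1 ≤ Sfun b σ + t then 1 else 0 := by
        have := count_lower (fun σ => 1 ≤ Sfun b σ + t)
          {![true,true,true,true,true], ![true,false,true,true,true],
           ![true,true,false,true,true], ![true,true,true,false,true],
           ![true,true,true,true,false], ![false,true,true,true,true]}
          (by intro σ hσ; fin_cases hσ <;> simp [Sfun, Fin.sum_univ_five] <;> linarith)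
        refine le_trans ?_ this
        decide
      have h1 : (1 : ℕ) ≤ ∑ σ : Fin 5 → Bool, if 1 ≤ Sfun b σ - t then 1 else 0 := by
        have := count_lower (fun σ => 1 ≤ Sfun b σ - t)
          {![true,true,true,true,true]}
          (by intro σ hσ; fin_cases hσ <;> simp [Sfun, Fin.sum_univ_five] <;> linarith)
        refine le_trans ?_ this
        decide
      omega

lemma core (b : Fin 5 → ℝ) (h01 : b 1 ≤ b 0) (h12 : b 2 ≤ b 1)
    (h23 : b 3 ≤ b 2) (h34 : b 4 ≤ b 3) (h4 : 0 < b 4)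
    (hs : 1 ≤ b 2 + b 3 + b 4) (t : ℝ) :
    7 ≤ (∑ σ : Fin 5 → Bool, if 1 ≤ Sfun b σ + t then 1 else 0) +
        (∑ σ : Fin 5 → Bool, if 1 ≤ Sfun b σ - t then 1 else 0) := by
  rcases le_total 0 t with ht | ht
  · exact core_nonneg b h01 h12 h23 h34 h4 hs t ht
  · have h := core_nonneg b h01 h12 h23 h34 h4 hs (-t) (by linarith)
    simp only [sub_neg_eq_add, ← sub_eq_add_neg] at h
    omega

lemma count_main (m : ℕ) (a : Fin (5 + m) → ℝ)
    (hmono : ∀ i j : Fin (5 + m), i ≤ j → a j ≤ a i) (hpos : ∀ i, 0 < a i)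
    (hs : 1 ≤ a ⟨2, by omega⟩ + a ⟨3, by omega⟩ + a ⟨4, by omega⟩) :
    7 * 2 ^ m ≤ 2 * ∑ ε : Fin (5 + m) → Bool,
      (if 1 ≤ ∑ i, a i * (if ε i then (1 : ℝ) else -1) then 1 else 0) := by
  set b : Fin 5 → ℝ := fun i => a (Fin.castAdd m i) with hb
  set c : Fin m → ℝ := fun j => a (Fin.natAdd 5 j) with hc
  set T : (Fin m → Bool) → ℝ := fun τ => ∑ j, c j * (if τ j then (1 : ℝ) else -1) with hT
  set X : (Fin (5 + m) → Bool) → ℝ :=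
    fun ε => ∑ i, a i * (if ε i then (1 : ℝ) else -1) with hX
  set g : (Fin (5 + m) → Bool) → ℕ := fun ε => if 1 ≤ X ε then 1 else 0 with hg
  set E : ((Fin 5 → Bool) × (Fin m → Bool)) ≃ (Fin (5 + m) → Bool) :=
    (Equiv.sumArrowEquivProdArrow _ _ _).symm.trans
      (Equiv.arrowCongr finSumFinEquiv (Equiv.refl _)) with hE
  have hEl : ∀ (σ : Fin 5 → Bool) (τ : Fin m → Bool) (i : Fin 5),
      E (σ, τ) (Fin.castAdd m i) = σ i := by
    intro σ τ i
    simp [hE, Equiv.sumArrowEquivProdArrow, Equiv.arrowCongr]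
  have hEr : ∀ (σ : Fin 5 → Bool) (τ : Fin m → Bool) (j : Fin m),
      E (σ, τ) (Fin.natAdd 5 j) = τ j := by
    intro σ τ j
    simp [hE, Equiv.sumArrowEquivProdArrow, Equiv.arrowCongr]
  have hsplit : ∀ σ τ, X (E (σ, τ)) = Sfun b σ + T τ := by
    intro σ τ
    rw [hX]
    dsimp only
    rw [← Equiv.sum_comp (finSumFinEquiv (m := 5) (n := m))
      (fun i => a i * (if E (σ, τ) i then (1 : ℝ) else -1)), Fintype.sum_sum_type]
    simp only [finSumFinEquiv_apply_left, finSumFinEquiv_apply_right, hEl, hEr]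
    rfl
  set neg : (Fin m → Bool) ≃ (Fin m → Bool) :=
    Function.Involutive.toPerm (fun τ => fun j => !(τ j))
      (fun τ => by funext j; simp) with hneg
  have hnsplit : ∀ σ τ, X (E (σ, neg τ)) = Sfun b σ - T τ := by
    intro σ τ
    rw [hsplit]
    have : T (neg τ) = - T τ := by
      rw [hT]
      dsimp only
      rw [← Finset.sum_neg_distrib]
      refine Finset.sum_congr rfl fun j _ => ?_
      have : neg τ j = !(τ j) := rfl
      rw [this]
      cases τ j <;> simp
    rw [this]
    ring
  have h1 : ∑ ε, g ε = ∑ τ, ∑ σ, g (E (σ, τ)) := by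
    rw [← Equiv.sum_comp E g, Fintype.sum_prod_type, Finset.sum_comm]
  have h2 : ∑ ε, g ε = ∑ τ, ∑ σ, g (E (σ, neg τ)) := by
    rw [h1, ← Equiv.sum_comp neg (fun τ => ∑ σ, g (E (σ, τ)))]
  calc 7 * 2 ^ m = ∑ _τ : Fin m → Bool, 7 := by
        have hcard : Fintype.card (Fin m → Bool) = 2 ^ m := by
          rw [Fintype.card_fun, Fintype.card_bool, Fintype.card_fin]
        rw [Finset.sum_const, smul_eq_mul, Finset.card_univ, hcard, mul_comm]
    _ ≤ ∑ τ : Fin m → Bool, (∑ σ, g (E (σ, τ)) + ∑ σ, g (E (σ, neg τ))) := by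
        refine Finset.sum_le_sum fun τ _ => ?_
        have e1 : ∑ σ, g (E (σ, τ)) = ∑ σ : Fin 5 → Bool,
            if 1 ≤ Sfun b σ + T τ then 1 else 0 :=
          Finset.sum_congr rfl fun σ _ => by rw [hg]; dsimp only; rw [hsplit]
        have e2 : ∑ σ, g (E (σ, neg τ)) = ∑ σ : Fin 5 → Bool,
            if 1 ≤ Sfun b σ - T τ then 1 else 0 :=
          Finset.sum_congr rfl fun σ _ => by rw [hg]; dsimp only; rw [hnsplit]
        rw [e1, e2]
        have hmono5 : ∀ i j : Fin 5, i ≤ j → b j ≤ b i := by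
          intro i j hij
          refine hmono _ _ ?_
          rw [Fin.le_def, Fin.coe_castAdd, Fin.coe_castAdd]
          exact hij
        refine core b (hmono5 0 1 (by decide)) (hmono5 1 2 (by decide))
          (hmono5 2 3 (by decide)) (hmono5 3 4 (by decide)) (hpos _) ?_ (T τ)
        · have e2 : b 2 = a ⟨2, by omega⟩ := by rw [hb]; congr 1
          have e3 : b 3 = a ⟨3, by omega⟩ := by rw [hb]; congr 1
          have e4 : b 4 = a ⟨4, by omega⟩ := by rw [hb]; congr 1
          rw [e2, e3, e4]; exact hs
    _ = 2 * ∑ ε, g ε := by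
        rw [Finset.sum_add_distrib, ← h1, ← h2]; ring

theorem a3_add_a4_add_a5_lt_one (n : ℕ) (hn : 5 ≤ n) (a : Fin n → ℝ)
    (hmono : ∀ i j : Fin n, i ≤ j → a j ≤ a i) (hpos : ∀ i, 0 < a i)
    (hnorm : ∑ i, (a i) ^ 2 = 1)
    (hX : radProb a (fun x => x ≥ 1) < 7 / 64) :
    a ⟨2, by omega⟩ + a ⟨3, by omega⟩ + a ⟨4, by omega⟩ < 1 := by
  by_contra hcon
  push_neg at hcon
  obtain ⟨m, rfl⟩ : ∃ m, n = 5 + m := ⟨n - 5, by omega⟩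
  have hkey := count_main m a hmono hpos hcon
  have hN : Nat.card {ε : Fin (5 + m) → Bool |
        (∑ i, a i * (if ε i then (1 : ℝ) else -1)) ≥ 1} =
      ∑ ε : Fin (5 + m) → Bool,
        (if 1 ≤ ∑ i, a i * (if ε i then (1 : ℝ) else -1) then 1 else 0) := by
    rw [Nat.card_eq_fintype_card, Fintype.card_subtype, Finset.card_filter]
    rfl
  have hprob : radProb a (fun x => x ≥ 1) =
      (∑ ε : Fin (5 + m) → Bool,
        (if 1 ≤ ∑ i, a i * (if ε i then (1 : ℝ) else -1) then 1 else 0) : ℕ) /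
      2 ^ (5 + m) := by
    rw [radProb, hN, Fintype.card_fin]
  rw [hprob] at hX
  have hc : ((7 : ℝ) * 2 ^ m) ≤ 2 * (∑ ε : Fin (5 + m) → Bool,
      (if 1 ≤ ∑ i, a i * (if ε i then (1 : ℝ) else -1) then 1 else 0) : ℕ) := by
    exact_mod_cast hkey
  have hpow : (2 : ℝ) ^ (5 + m) = 32 * 2 ^ m := by
    rw [pow_add]; norm_num
  have h2m : (0 : ℝ) < 2 ^ m := by positivity
  rw [div_lt_div_iff₀ (by positivity) (by norm_num)] at hX
  rw [hpow] at hX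
  nlinarith [hX, hc, h2m]
end

section
/- Let X = Σ_{i=1}^n a_i ε_i be a normalized finite Rademacher sum with a_1 ≥ a_2 ≥ ... ≥ a_n > 0, n ≥ 9, and suppose |a_i − 1/3| ≤ 0.07 for each 1 ≤ i ≤ 9. If P(X ≥ 1) < 7/64, then a_1 + a_2 + a_3 < 1. -/
open Finset

section SignedSum

variable {ι κ : Type*} [Fintype ι] [Fintype κ]

noncomputable def signedSum (a : ι → ℝ) (ε : ι → Bool) : ℝ :=
  ∑ i, a i * (if ε i then 1 else -1)

lemma radProb_eq_card [DecidableEq ι] (a : ι → ℝ) (p : ℝ → Prop) [DecidablePred p] :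
    radProb a p = #{ε | p (signedSum a ε)} / 2 ^ Fintype.card ι := by
  rw [radProb, Nat.card_eq_fintype_card, Fintype.card_subtype]
  rfl

lemma signedSum_comp_equiv (e : κ ≃ ι) (a : ι → ℝ) (ε : κ → Bool) :
    signedSum (a ∘ e) ε = signedSum a (ε ∘ e.symm) := by
  rw [signedSum, signedSum, ← e.sum_comp]
  simp

lemma radProb_comp_equiv (e : κ ≃ ι) (a : ι → ℝ) (p : ℝ → Prop) :
    radProb (a ∘ e) p = radProb a p := by
  classical
  rw [radProb_eq_card, radProb_eq_card, Fintype.card_congr e]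
  congr 2
  refine card_equiv (e.arrowCongr (Equiv.refl Bool)) fun ε => ?_
  simp only [mem_filter, mem_univ, true_and, signedSum_comp_equiv]
  rfl

lemma signedSum_sumElim (a : ι → ℝ) (c : κ → ℝ) (σ : ι → Bool) (τ : κ → Bool) :
    signedSum (Sum.elim a c) (Sum.elim σ τ) = signedSum a σ + signedSum c τ :=
  Fintype.sum_sum_type _

lemma signedSum_not (c : κ → ℝ) (τ : κ → Bool) :
    signedSum c (fun k => !τ k) = -signedSum c τ := by
  rw [signedSum, signedSum, ← sum_neg_distrib]
  exact Fintype.sum_congr _ _ fun k => by cases τ k <;> simp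

lemma two_pow_card_le_card_add_card_of_add_nonpos [DecidableEq κ] {u u' : ℝ} (c : κ → ℝ) (huu' : u + u' ≤ 0) :
    2 ^ Fintype.card κ ≤ #{τ | u ≤ signedSum c τ} + #{τ | u' ≤ signedSum c τ} := by
  calc 2 ^ Fintype.card κ
      = #{τ | u ≤ signedSum c τ} + #{τ | ¬u ≤ signedSum c τ} := by
        rw [card_filter_add_card_filter_not, card_univ, Fintype.card_fun, Fintype.card_bool]
    _ ≤ #{τ | u ≤ signedSum c τ} + #{τ | u' ≤ signedSum c τ} := by
        refine Nat.add_le_add_left (card_le_card_of_injOn (fun (τ : κ → Bool) k => !τ k)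
          (fun τ hτ => ?_) fun τ _ τ' _ h => ?_) _
        · simp only [coe_filter, mem_univ, true_and, Set.mem_ofPred_eq] at hτ ⊢
          rw [signedSum_not]
          linarith
        · funext k
          simpa using congrFun h k

lemma card_le_signedSum_sumElim [DecidableEq ι] [DecidableEq κ] (a : ι → ℝ) (c : κ → ℝ) (t : ℝ) :
    #{ε : ι ⊕ κ → Bool | t ≤ signedSum (Sum.elim a c) ε} =
      ∑ σ, #{τ | t - signedSum a σ ≤ signedSum c τ} := by
  simp only [card_filter]
  rw [← (Equiv.sumArrowEquivProdArrow ι κ Bool).symm.sum_comp, Fintype.sum_prod_type]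
  refine Fintype.sum_congr _ _ fun σ => Fintype.sum_congr _ _ fun τ => ?_
  rw [show (Equiv.sumArrowEquivProdArrow ι κ Bool).symm (σ, τ) = Sum.elim σ τ from rfl,
    signedSum_sumElim]
  simp only [sub_le_iff_le_add']

lemma length_mul_le_card_of_pairs [DecidableEq ι] [DecidableEq κ] (a : ι → ℝ) (c : κ → ℝ) (t : ℝ)
    (L : List ((ι → Bool) × (ι → Bool))) (hL : (L.flatMap fun p => [p.1, p.2]).Nodup)
    (hpair : ∀ p ∈ L, 2 * t ≤ signedSum a p.1 + signedSum a p.2) :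
    L.length * 2 ^ Fintype.card κ ≤ #{ε : ι ⊕ κ → Bool | t ≤ signedSum (Sum.elim a c) ε} := by
  set f : (ι → Bool) → ℕ := fun σ => #{τ | t - signedSum a σ ≤ signedSum c τ}
  calc L.length * 2 ^ Fintype.card κ
      ≤ (L.map fun p => f p.1 + f p.2).sum := by
        rw [← smul_eq_mul, ← List.length_map (f := fun p => f p.1 + f p.2)]
        refine List.card_nsmul_le_sum _ _ fun x hx => ?_
        obtain ⟨p, hp, rfl⟩ := List.mem_map.1 hx
        exact two_pow_card_le_card_add_card_of_add_nonpos c (by linarith [hpair p hp])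
    _ = ((L.flatMap fun p => [p.1, p.2]).map f).sum := by
        simp [List.flatMap, List.sum_flatten, Function.comp_def]
    _ = ∑ σ ∈ (L.flatMap fun p => [p.1, p.2]).toFinset, f σ := (List.sum_toFinset f hL).symm
    _ ≤ ∑ σ, f σ := sum_le_sum_of_subset (subset_univ _)
    _ = _ := (card_le_signedSum_sumElim a c t).symm

lemma length_div_le_radProb_sumElim (a : ι → ℝ) (c : κ → ℝ) (t : ℝ)
    (L : List ((ι → Bool) × (ι → Bool))) (hL : (L.flatMap fun p => [p.1, p.2]).Nodup)
    (hpair : ∀ p ∈ L, 2 * t ≤ signedSum a p.1 + signedSum a p.2) :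
    L.length / 2 ^ Fintype.card ι ≤ radProb (Sum.elim a c) (· ≥ t) := by
  classical
  have hcount := length_mul_le_card_of_pairs a c t L hL hpair
  rw [radProb_eq_card, Fintype.card_sum, pow_add, div_le_div_iff₀ (by positivity) (by positivity)]
  calc (L.length : ℝ) * (2 ^ Fintype.card ι * 2 ^ Fintype.card κ)
      = (L.length * 2 ^ Fintype.card κ : ℕ) * 2 ^ Fintype.card ι := by push_cast; ring
    _ ≤ _ := by gcongr

end SignedSum

lemma radProb_eq_radProb_sumElim {m n : ℕ} (hmn : m ≤ n) (a : Fin n → ℝ) (p : ℝ → Prop) :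
    radProb a p = radProb (Sum.elim (fun j : Fin m => a ⟨j, by omega⟩)
      (fun k : Fin (n - m) => a ⟨m + k, by omega⟩)) p := by
  rw [← radProb_comp_equiv (finSumFinEquiv.trans (finCongr (by omega : m + (n - m) = n))) a]
  congr 1
  funext x
  cases x <;> rfl

-- Binary digits are read from the most significant one: `0b110110100` is the pattern `++-++-+--`.
def signsOfBits (m : ℕ) : Fin 9 → Bool := fun j => m.testBit (8 - j)

-- The first 32 pairs match `+++x` with `+++(-x)`, whose head sums add up to `2 (a₁ + a₂ + a₃)`;
-- the other 24 come from a computer search.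
def matching : List ((Fin 9 → Bool) × (Fin 9 → Bool)) :=
  List.map (Prod.map signsOfBits signsOfBits) <|
  (List.range 32).map (fun k => (0b111100000 + k, 0b111011111 - k)) ++
  [(0b110111111, 0b110110100), (0b110111110, 0b110101011), (0b110111101, 0b110011110),
   (0b110111100, 0b101111101), (0b110111011, 0b110011011), (0b110111010, 0b011111101),
   (0b110111001, 0b011111011), (0b110111000, 0b101111111), (0b110110111, 0b101110011),
   (0b110110110, 0b011101111), (0b110110101, 0b011011111), (0b110110011, 0b001111111),
   (0b110110010, 0b011111111), (0b110101111, 0b101111010), (0b110101110, 0b101111011),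
   (0b110101101, 0b101110111), (0b110100111, 0b101111110), (0b110011111, 0b101110101),
   (0b110011101, 0b101101111), (0b110010111, 0b100111111), (0b110001111, 0b101011111),
   (0b101111100, 0b011111110), (0b101111001, 0b010111111), (0b101110110, 0b011110111)]

lemma matching_nodup : (matching.flatMap fun p => [p.1, p.2]).Nodup := by
  decide

set_option maxHeartbeats 1000000 in
lemma two_le_signedSum_add_of_mem_matching {b : Fin 9 → ℝ}
    (hb : ∀ j, 79 / 300 ≤ b j ∧ b j ≤ 121 / 300) (hanti : Antitone b)
    (hsum : 1 ≤ b 0 + b 1 + b 2) :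
    ∀ p ∈ matching, 2 ≤ signedSum b p.1 + signedSum b p.2 := by
  have h0 := hb 0; have h1 := hb 1; have h2 := hb 2; have h3 := hb 3; have h4 := hb 4
  have h5 := hb 5; have h6 := hb 6; have h7 := hb 7; have h8 := hb 8
  have m01 := hanti (show (0 : Fin 9) ≤ 1 by decide)
  have m12 := hanti (show (1 : Fin 9) ≤ 2 by decide)
  have m23 := hanti (show (2 : Fin 9) ≤ 3 by decide)
  have m34 := hanti (show (3 : Fin 9) ≤ 4 by decide)
  have m45 := hanti (show (4 : Fin 9) ≤ 5 by decide)
  have m56 := hanti (show (5 : Fin 9) ≤ 6 by decide)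
  have m67 := hanti (show (6 : Fin 9) ≤ 7 by decide)
  have m78 := hanti (show (7 : Fin 9) ≤ 8 by decide)
  intro p hp
  fin_cases hp <;> simp +decide [signedSum, signsOfBits, Fin.sum_univ_succ] <;> linarith

theorem caseC_a1_add_a2_add_a3_lt_one (n : ℕ) (hn : 9 ≤ n) (a : Fin n → ℝ)
    (hmono : ∀ i j : Fin n, i ≤ j → a j ≤ a i)
    (hclose : ∀ i : Fin n, (i : ℕ) < 9 → |a i - 1 / 3| ≤ 0.07)
    (hX : radProb a (fun x => x ≥ 1) < 7 / 64) :
    a ⟨0, by omega⟩ + a ⟨1, by omega⟩ + a ⟨2, by omega⟩ < 1 := by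
  by_contra! hsum
  set b : Fin 9 → ℝ := fun j => a ⟨j, by omega⟩
  have hb : ∀ j, 79 / 300 ≤ b j ∧ b j ≤ 121 / 300 := fun j => by
    have := abs_le.1 (hclose ⟨j, by omega⟩ j.2)
    constructor <;> norm_num at this ⊢ <;> linarith
  have hanti : Antitone b := fun i j hij => hmono _ _ hij
  have hP := length_div_le_radProb_sumElim b (fun k : Fin (n - 9) => a ⟨9 + k, by omega⟩) 1
    matching matching_nodup
    fun p hp => by linarith [two_le_signedSum_add_of_mem_matching hb hanti hsum p hp]
  rw [← radProb_eq_radProb_sumElim hn] at hP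
  norm_num [matching] at hP
  linarith
end

section
/- Let X = Σ_{i=1}^n a_i ε_i be a normalized finite Rademacher sum with a_1 ≥ a_2 ≥ ... ≥ a_n > 0, n ≥ 7, and suppose |a_i − 1/2| ≤ 0.005 for each 1 ≤ i ≤ 3 and |a_i − 1/4| ≤ 0.005 for each 4 ≤ i ≤ 7. Then P(X ≥ 1) ≥ 7/64. -/
open Finset
open scoped Classical

def cw : Fin 7 → ℤ := fun i => if (i:ℕ) < 3 then 2 else 1

lemma key_bound (b : Fin 7 → ℝ)
    (h1 : ∀ i : Fin 7, (i : ℕ) < 3 → |b i - 1/2| ≤ 0.005)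
    (h2 : ∀ i : Fin 7, 3 ≤ (i : ℕ) → |b i - 1/4| ≤ 0.005)
    (h : Fin 7 → Bool) :
    ((∑ i, cw i * (if h i then (1:ℤ) else -1)) : ℝ) - 0.14
      ≤ 4 * ∑ i, b i * (if h i then (1:ℝ) else -1) := by
  have key : ∀ i : Fin 7, ((cw i : ℝ) * (if h i then (1:ℝ) else -1)) - 0.02
      ≤ 4 * (b i * (if h i then (1:ℝ) else -1)) := by
    intro i
    have hb : |4 * b i - (cw i : ℝ)| ≤ 0.02 := by
      rcases lt_or_ge (i : ℕ) 3 with hi | hi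
      · have := h1 i hi
        have hc : (cw i : ℝ) = 2 := by simp [cw, if_pos hi]
        rw [hc]
        rw [abs_le] at this ⊢; constructor <;> linarith [this.1, this.2]
      · have := h2 i hi
        have hc : (cw i : ℝ) = 1 := by simp [cw, if_neg (by omega : ¬ (i:ℕ) < 3)]
        rw [hc]
        rw [abs_le] at this ⊢; constructor <;> linarith [this.1, this.2]
    rw [abs_le] at hb
    cases hh : h i <;> simp [hh] <;> nlinarith [hb.1, hb.2]
  have cast_eq : ((∑ i, cw i * (if h i then (1:ℤ) else -1)) : ℝ)
      = ∑ i : Fin 7, (cw i : ℝ) * (if h i then (1:ℝ) else -1) := by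
    push_cast [apply_ite (Int.cast : ℤ → ℝ)]
    norm_num
  calc ((∑ i, cw i * (if h i then (1:ℤ) else -1)) : ℝ) - 0.14
      = ∑ i : Fin 7, (((cw i : ℝ) * (if h i then (1:ℝ) else -1)) - 0.02) := by
        rw [Finset.sum_sub_distrib, Finset.sum_const, cast_eq]
        simp; norm_num
    _ ≤ ∑ i : Fin 7, 4 * (b i * (if h i then (1:ℝ) else -1)) :=
        Finset.sum_le_sum fun i _ => key i
    _ = 4 * ∑ i, b i * (if h i then (1:ℝ) else -1) := by rw [Finset.mul_sum]

lemma count14 : (Finset.univ.filter (fun h : Fin 7 → Bool => 6 ≤ ∑ i, cw i * (if h i then (1:ℤ) else -1))).card = 14 := by decide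
lemma count30 : (Finset.univ.filter (fun h : Fin 7 → Bool => 4 ≤ ∑ i, cw i * (if h i then (1:ℤ) else -1))).card = 30 := by decide

lemma head_count (b : Fin 7 → ℝ)
    (h1 : ∀ i : Fin 7, (i : ℕ) < 3 → |b i - 1/2| ≤ 0.005)
    (h2 : ∀ i : Fin 7, 3 ≤ (i : ℕ) → |b i - 1/4| ≤ 0.005) (t : ℝ) :
    28 ≤ (Finset.univ.filter (fun h : Fin 7 → Bool =>
            1 - t ≤ ∑ i, b i * (if h i then (1:ℝ) else -1))).card
       + (Finset.univ.filter (fun h : Fin 7 → Bool =>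
            1 + t ≤ ∑ i, b i * (if h i then (1:ℝ) else -1))).card := by
  have kb := key_bound b h1 h2
  rcases le_or_gt t (-(0.465 : ℝ)) with ht | ht
  · have hsub : (Finset.univ.filter (fun h : Fin 7 → Bool =>
        4 ≤ ∑ i, cw i * (if h i then (1:ℤ) else -1)))
        ⊆ Finset.univ.filter (fun h : Fin 7 → Bool =>
            1 + t ≤ ∑ i, b i * (if h i then (1:ℝ) else -1)) := by
      intro h hh
      simp only [Finset.mem_filter, Finset.mem_univ, true_and] at hh ⊢
      have h4 : (4:ℝ) ≤ ((∑ i, cw i * (if h i then (1:ℤ) else -1)) : ℝ) := by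
        exact_mod_cast hh
      have := kb h
      linarith
    exact le_trans (le_trans (by norm_num) (count30.symm.trans_le (Finset.card_le_card hsub)))
      (Nat.le_add_left _ _)
  rcases le_or_gt (0.465 : ℝ) t with ht2 | ht2
  · have hsub : (Finset.univ.filter (fun h : Fin 7 → Bool =>
        4 ≤ ∑ i, cw i * (if h i then (1:ℤ) else -1)))
        ⊆ Finset.univ.filter (fun h : Fin 7 → Bool =>
            1 - t ≤ ∑ i, b i * (if h i then (1:ℝ) else -1)) := by
      intro h hh
      simp only [Finset.mem_filter, Finset.mem_univ, true_and] at hh ⊢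
      have h4 : (4:ℝ) ≤ ((∑ i, cw i * (if h i then (1:ℤ) else -1)) : ℝ) := by
        exact_mod_cast hh
      have := kb h
      linarith
    exact le_trans (le_trans (by norm_num) (count30.symm.trans_le (Finset.card_le_card hsub)))
      (Nat.le_add_right _ _)
  · have hsub1 : (Finset.univ.filter (fun h : Fin 7 → Bool =>
        6 ≤ ∑ i, cw i * (if h i then (1:ℤ) else -1)))
        ⊆ Finset.univ.filter (fun h : Fin 7 → Bool =>
            1 - t ≤ ∑ i, b i * (if h i then (1:ℝ) else -1)) := by
      intro h hh
      simp only [Finset.mem_filter, Finset.mem_univ, true_and] at hh ⊢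
      have h6 : (6:ℝ) ≤ ((∑ i, cw i * (if h i then (1:ℤ) else -1)) : ℝ) := by
        exact_mod_cast hh
      have := kb h
      linarith
    have hsub2 : (Finset.univ.filter (fun h : Fin 7 → Bool =>
        6 ≤ ∑ i, cw i * (if h i then (1:ℤ) else -1)))
        ⊆ Finset.univ.filter (fun h : Fin 7 → Bool =>
            1 + t ≤ ∑ i, b i * (if h i then (1:ℝ) else -1)) := by
      intro h hh
      simp only [Finset.mem_filter, Finset.mem_univ, true_and] at hh ⊢
      have h6 : (6:ℝ) ≤ ((∑ i, cw i * (if h i then (1:ℤ) else -1)) : ℝ) := by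
        exact_mod_cast hh
      have := kb h
      linarith
    have c1 := count14.symm.trans_le (Finset.card_le_card hsub1)
    have c2 := count14.symm.trans_le (Finset.card_le_card hsub2)
    calc (28:ℕ) = 14 + 14 := by norm_num
      _ ≤ _ := Nat.add_le_add c1 c2

theorem caseH_prob_ge (n : ℕ) (hn : 7 ≤ n) (a : Fin n → ℝ)
    (hmono : ∀ i j : Fin n, i ≤ j → a j ≤ a i) (hpos : ∀ i, 0 < a i)
    (hnorm : ∑ i, (a i) ^ 2 = 1)
    (hclose1 : ∀ i : Fin n, (i : ℕ) < 3 → |a i - 1 / 2| ≤ 0.005)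
    (hclose2 : ∀ i : Fin n, 3 ≤ (i : ℕ) → (i : ℕ) < 7 → |a i - 1 / 4| ≤ 0.005) :
    radProb a (fun x => x ≥ 1) ≥ 7 / 64 := by
  obtain ⟨m, rfl⟩ := Nat.exists_eq_add_of_le hn
  -- head and tail weights
  set b : Fin 7 → ℝ := fun i => a (Fin.castAdd m i) with hb
  set c : Fin m → ℝ := fun j => a (Fin.natAdd 7 j) with hc
  set H : (Fin 7 → Bool) → ℝ := fun h => ∑ i, b i * (if h i then (1:ℝ) else -1) with hH
  set T : (Fin m → Bool) → ℝ := fun τ => ∑ j, c j * (if τ j then (1:ℝ) else -1) with hT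
  -- the equivalence between products of sign patterns and full sign patterns
  let eqv : ((Fin 7 → Bool) × (Fin m → Bool)) ≃ (Fin (7 + m) → Bool) :=
    (Equiv.sumArrowEquivProdArrow _ _ Bool).symm.trans
      (Equiv.arrowCongr finSumFinEquiv (Equiv.refl Bool))
  have heqv : ∀ (p : (Fin 7 → Bool) × (Fin m → Bool)) (i : Fin (7 + m)),
      eqv p i = Sum.elim p.1 p.2 (finSumFinEquiv.symm i) := fun p i => rfl
  -- splitting the sum
  have hsplit : ∀ p : (Fin 7 → Bool) × (Fin m → Bool),
      ∑ i, a i * (if eqv p i then (1:ℝ) else -1) = H p.1 + T p.2 := by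
    intro p
    have e1 : ∀ i : Fin 7, a (Fin.castAdd m i) * (if eqv p (Fin.castAdd m i) then (1:ℝ) else -1)
        = b i * (if p.1 i then (1:ℝ) else -1) := by
      intro i
      simp only [heqv, finSumFinEquiv_symm_apply_castAdd, Sum.elim_inl, hb]
    have e2 : ∀ j : Fin m, a (Fin.natAdd 7 j) * (if eqv p (Fin.natAdd 7 j) then (1:ℝ) else -1)
        = c j * (if p.2 j then (1:ℝ) else -1) := by
      intro j
      simp only [heqv, finSumFinEquiv_symm_apply_natAdd, Sum.elim_inr, hc]
    rw [Fin.sum_univ_add (f := fun i => a i * (if eqv p i then (1:ℝ) else -1)), hH, hT]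
    exact congrArg₂ (· + ·) (Finset.sum_congr rfl fun i _ => e1 i)
      (Finset.sum_congr rfl fun j _ => e2 j)
  -- rewrite Nat.card as a Finset card
  have hcard : (Nat.card {ε : Fin (7 + m) → Bool |
        (∑ i, a i * (if ε i then (1 : ℝ) else -1)) ≥ 1} : ℕ)
      = (Finset.univ.filter (fun ε : Fin (7 + m) → Bool =>
          1 ≤ ∑ i, a i * (if ε i then (1:ℝ) else -1))).card := by
    rw [Nat.card_coe_set_eq, Set.ncard_eq_toFinset_card']
    congr 1
    ext ε
    simp [Set.mem_toFinset, ge_iff_le]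
  -- transfer the count to the product space
  have hprod : (Finset.univ.filter (fun ε : Fin (7 + m) → Bool =>
          1 ≤ ∑ i, a i * (if ε i then (1:ℝ) else -1))).card
      = (Finset.univ.filter (fun p : (Fin 7 → Bool) × (Fin m → Bool) =>
          1 ≤ H p.1 + T p.2)).card := by
    refine Finset.card_equiv eqv.symm fun ε => ?_
    simp only [Finset.mem_filter, Finset.mem_univ, true_and]
    rw [← hsplit (eqv.symm ε), Equiv.apply_symm_apply]
  -- fiberwise count
  have hfiber : (Finset.univ.filter (fun p : (Fin 7 → Bool) × (Fin m → Bool) =>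
          1 ≤ H p.1 + T p.2)).card
      = ∑ τ : Fin m → Bool, (Finset.univ.filter (fun h : Fin 7 → Bool =>
          1 ≤ H h + T τ)).card := by
    rw [Finset.card_filter]
    rw [Fintype.sum_prod_type_right]
    refine Finset.sum_congr rfl fun τ _ => ?_
    rw [Finset.card_filter]
  -- pairing lower bound
  have hpair : ∀ τ : Fin m → Bool,
      28 ≤ (Finset.univ.filter (fun h : Fin 7 → Bool => 1 ≤ H h + T τ)).card
         + (Finset.univ.filter (fun h : Fin 7 → Bool => 1 ≤ H h + T (fun j => !τ j))).card := by
    intro τ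
    have hTneg : T (fun j => !τ j) = -T τ := by
      rw [hT, ← Finset.sum_neg_distrib]
      refine Finset.sum_congr rfl fun j _ => ?_
      cases hj : τ j <;> simp [hj]
    have := head_count b
      (fun i hi => hclose1 (Fin.castAdd m i) (by simpa using hi))
      (fun i hi => hclose2 (Fin.castAdd m i) (by simpa using hi) (by simpa using i.isLt))
      (T τ)
    have e1 : (Finset.univ.filter (fun h : Fin 7 → Bool => 1 ≤ H h + T τ))
        = (Finset.univ.filter (fun h : Fin 7 → Bool =>
            1 - T τ ≤ ∑ i, b i * (if h i then (1:ℝ) else -1))) := by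
      refine Finset.filter_congr fun h _ => ?_
      rw [hH]; constructor <;> intro <;> linarith
    have e2 : (Finset.univ.filter (fun h : Fin 7 → Bool => 1 ≤ H h + T (fun j => !τ j)))
        = (Finset.univ.filter (fun h : Fin 7 → Bool =>
            1 + T τ ≤ ∑ i, b i * (if h i then (1:ℝ) else -1))) := by
      refine Finset.filter_congr fun h _ => ?_
      rw [hTneg, hH]; constructor <;> intro <;> linarith
    rw [e1, e2]
    exact this
  -- sum over negated tails equals sum over tails
  have hnegsum : ∑ τ : Fin m → Bool, (Finset.univ.filter
        (fun h : Fin 7 → Bool => 1 ≤ H h + T (fun j => !τ j))).card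
      = ∑ τ : Fin m → Bool, (Finset.univ.filter
        (fun h : Fin 7 → Bool => 1 ≤ H h + T τ)).card := by
    refine Fintype.sum_bijective (fun τ : Fin m → Bool => fun j => !τ j)
      (Function.Involutive.bijective (fun τ => by funext j; simp)) _ _ fun τ => rfl
  -- main counting bound
  have hmain : 14 * 2 ^ m ≤ ∑ τ : Fin m → Bool, (Finset.univ.filter
        (fun h : Fin 7 → Bool => 1 ≤ H h + T τ)).card := by
    have h2 : 28 * 2 ^ m ≤ 2 * ∑ τ : Fin m → Bool, (Finset.univ.filter
        (fun h : Fin 7 → Bool => 1 ≤ H h + T τ)).card := by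
      have : 28 * 2 ^ m = ∑ _τ : Fin m → Bool, 28 := by
        rw [Finset.sum_const, Finset.card_univ]
        simp [mul_comm]
      rw [this, two_mul]
      calc ∑ τ : Fin m → Bool, 28
          ≤ ∑ τ : Fin m → Bool, ((Finset.univ.filter (fun h : Fin 7 → Bool => 1 ≤ H h + T τ)).card
            + (Finset.univ.filter (fun h : Fin 7 → Bool => 1 ≤ H h + T (fun j => !τ j))).card) :=
            Finset.sum_le_sum fun τ _ => hpair τ
        _ = _ := by rw [Finset.sum_add_distrib, hnegsum]
    have h2' : 2 * (14 * 2 ^ m) ≤ 2 * ∑ τ : Fin m → Bool, (Finset.univ.filter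
        (fun h : Fin 7 → Bool => 1 ≤ H h + T τ)).card := by
      calc 2 * (14 * 2 ^ m) = 28 * 2 ^ m := by ring
        _ ≤ _ := h2
    exact Nat.le_of_mul_le_mul_left h2' (by norm_num)
  -- conclusion
  unfold radProb
  rw [ge_iff_le, hcard, hprod, hfiber]
  rw [Fintype.card_fin]
  rw [div_le_div_iff₀ (by norm_num) (by positivity)]
  calc (7:ℝ) * 2 ^ (7 + m) = 64 * (14 * 2 ^ m) := by rw [pow_add]; ring
    _ ≤ 64 * (∑ τ : Fin m → Bool, (Finset.univ.filter
          (fun h : Fin 7 → Bool => 1 ≤ H h + T τ)).card : ℕ) := by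
        have := hmain
        gcongr
        exact_mod_cast hmain
    _ = _ := by ring
end
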